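/- Let M ⊆ ℝ be a complete subset and N a complete metric space. Every curve-flat base-point-preserving Lipschitz map f : M → N factors through a complete purely 1-unrectifiable metric space: there exist a complete purely 1-unrectifiable metric space Q and Lipschitz maps g : M → Q, h : Q → N with f = h ∘ g. -/

import Mathlib

open Filter Set Topology

/-- The 1-dimensional Hausdorff measure on a metric space (with the Borel σ-algebra). -/
noncomputable def H1 (P : Type*) [MetricSpace P] : @MeasureTheory.Measure P (borel P) :=
  @MeasureTheory.Measure.hausdorffMeasure P _ (borel P) (@BorelSpace.mk P _ (borel P) rfl) 1

/-- A map `f : M → N` is curve-flat. -/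
def CurveFlat {M N : Type*} [MetricSpace M] [MetricSpace N] (f : M → N) : Prop :=
  ∀ (K : Set ℝ), IsCompact K → ∀ (γ : ℝ → M) (C : NNReal), LipschitzOnWith C γ K →
    ∀ᵐ x ∂(MeasureTheory.volume.restrict K),
      Tendsto (fun y => dist (f (γ x)) (f (γ y)) / |x - y|) (nhdsWithin x (K \ {x})) (nhds 0)

/-- A metric space is purely 1-unrectifiable. -/
def PurelyOneUnrectifiable (P : Type*) [MetricSpace P] : Prop :=
  ∀ (A : Set ℝ) (γ : ℝ → P) (C : NNReal), LipschitzOnWith C γ A → H1 P (γ '' A) = 0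

/-- A factorization of `f : M → N` through a complete purely 1-unrectifiable
metric space. -/
structure P1UFactorization {M N : Type} [MetricSpace M] [MetricSpace N] (f : M → N) :
    Type 1 where
  Q : Type
  [iQ : MetricSpace Q]
  complete : CompleteSpace Q
  p1u : PurelyOneUnrectifiable Q
  g : M → Q
  h : Q → N
  Lg : NNReal
  Lh : NNReal
  lipg : LipschitzWith Lg g
  liph : LipschitzWith Lh h
  fact : f = h ∘ g

/-! The space `f` factors through is the completion `Q` of `M` under the oscillation
pseudometric `d x y = diam f(M ∩ [x, y])`: `f` is `Lf`-Lipschitz into `Q` and `Q → N` is the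
1-Lipschitz extension of `f`. We show `H¹(Q) = 0`. Each bounded piece `M ∩ [-r, r]` is compact,
and by curve-flatness, at almost every point `x` of the piece the balls of radius `ρ` around `x` have
`d`-diameter `o(ρ)`; a Besicovitch covering then makes the image of the piece `H¹`-null. Since
`d` grows along the order of `ℝ`, the remaining points of `Q` are limits along `x → +∞` or
`x → -∞`, and there is at most one of each. -/

open MeasureTheory Metric UniformSpace
open scoped ENNReal NNReal

theorem Function.invFun_subtype_val {α : Type*} {p : α → Prop} [Nonempty (Subtype p)] {a : α}
    (ha : p a) : Function.invFun Subtype.val a = (⟨a, ha⟩ : Subtype p) :=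
  Function.leftInverse_invFun Subtype.val_injective ⟨a, ha⟩

section Flat

variable {X : Type*} [EMetricSpace X]

def FlatWithinAt (q : ℝ → X) (s : Set ℝ) (x : ℝ) : Prop :=
  ∀ ε > 0, ∀ᶠ r in 𝓝[>] 0, ediam (q '' (s ∩ closedBall x r)) ≤ ENNReal.ofReal (ε * r)

theorem FlatWithinAt.mono {q : ℝ → X} {s t : Set ℝ} {x : ℝ} (h : FlatWithinAt q t x)
    (hst : s ⊆ t) : FlatWithinAt q s x := fun ε hε =>
  (h ε hε).mono fun _ hr => (ediam_mono (image_mono (inter_subset_inter_left _ hst))).trans hr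

variable [MeasurableSpace X] [BorelSpace X] {q : ℝ → X} {s : Set ℝ}

/-- Cover `s` by Besicovitch balls `closedBall x r` whose `q`-images have diameter `≤ ε r`. -/
theorem hausdorffMeasure_image_le_of_flatWithinAt (hflat : ∀ x ∈ s, FlatWithinAt q s x)
    {ε : ℝ} (hε : 0 < ε) : μH[1] (q '' s) ≤ ENNReal.ofReal ε * (volume s + 1) := by
  set F : ℕ → ℝ → Set ℝ := fun m x =>
    {r | r ∈ Ioc 0 (1 / ((m : ℝ) + 1)) ∧ ediam (q '' (s ∩ closedBall x r)) ≤ ENNReal.ofReal (ε * r)}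
  have hF : ∀ m, ∀ x ∈ s, ∀ δ > 0, (F m x ∩ Ioo 0 δ).Nonempty := by
    intro m x hx δ hδ
    obtain ⟨r, hr, hr0, hrδ⟩ := ((hflat x hx ε hε).and
      (Ioo_mem_nhdsGT (show (0 : ℝ) < min δ (1 / ((m : ℝ) + 1)) by positivity))).exists
    exact ⟨r, ⟨⟨hr0, hrδ.le.trans (min_le_right _ _)⟩, hr⟩, hr0, hrδ.trans_le (min_le_left _ _)⟩
  choose T rad hTc hTs hTrad hTcov hTsum using fun m =>
    Besicovitch.exists_closedBall_covering_tsum_measure_le volume one_ne_zero (F m) s (hF m)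
  have : ∀ m, Countable (T m) := fun m => (hTc m).to_subtype
  set piece : ∀ m, T m → Set X := fun m i => q '' (s ∩ closedBall (i : ℝ) (rad m i))
  have hpiece : ∀ m (i : T m), ediam (piece m i) ≤ ENNReal.ofReal (ε * rad m i) :=
    fun m i => (hTrad m i i.2).2
  have hsum : ∀ m, ∑' i, ediam (piece m i) ^ (1 : ℝ) ≤ ENNReal.ofReal ε * (volume s + 1) := by
    intro m
    calc ∑' i, ediam (piece m i) ^ (1 : ℝ)
        ≤ ∑' i : T m, ENNReal.ofReal ε * volume (closedBall (i : ℝ) (rad m i)) := by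
          refine ENNReal.tsum_le_tsum fun i => ?_
          have hr := (hTrad m i i.2).1.1
          rw [ENNReal.rpow_one, Real.volume_closedBall, ← ENNReal.ofReal_mul hε.le]
          exact (hpiece m i).trans (ENNReal.ofReal_le_ofReal (by nlinarith))
      _ = ENNReal.ofReal ε * ∑' i : T m, volume (closedBall (i : ℝ) (rad m i)) :=
          ENNReal.tsum_mul_left
      _ ≤ ENNReal.ofReal ε * (volume s + 1) := by gcongr; exact hTsum m
  have hcover : ∀ m, q '' s ⊆ ⋃ i, piece m i := by
    rintro m _ ⟨x, hx, rfl⟩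
    obtain ⟨i, hi, hxi⟩ := mem_iUnion₂.mp (hTcov m hx)
    exact mem_iUnion.2 ⟨⟨i, hi⟩, x, ⟨hx, hxi⟩, rfl⟩
  have hscale : Tendsto (fun m : ℕ => ENNReal.ofReal (ε * (1 / ((m : ℝ) + 1)))) atTop (𝓝 0) := by
    simpa using ENNReal.tendsto_ofReal (tendsto_one_div_add_atTop_nhds_zero_nat.const_mul ε)
  calc μH[1] (q '' s)
      ≤ liminf (fun m => ∑' i, ediam (piece m i) ^ (1 : ℝ)) atTop :=
        Measure.hausdorffMeasure_le_liminf_tsum 1 (q '' s) _ hscale piece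
          (Eventually.of_forall fun m i => (hpiece m i).trans
            (ENNReal.ofReal_le_ofReal (by gcongr; exact (hTrad m i i.2).1.2)))
          (Eventually.of_forall hcover)
    _ ≤ ENNReal.ofReal ε * (volume s + 1) :=
        liminf_le_of_frequently_le' (Frequently.of_forall hsum)

theorem hausdorffMeasure_image_eq_zero_of_flatWithinAt (hs : volume s ≠ ∞)
    (hflat : ∀ x ∈ s, FlatWithinAt q s x) : μH[1] (q '' s) = 0 := by
  have hbound : Tendsto (fun ε => ENNReal.ofReal ε * (volume s + 1)) (𝓝[>] 0) (𝓝 0) := by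
    simpa using ENNReal.Tendsto.mul_const
      (ENNReal.tendsto_ofReal (tendsto_nhdsWithin_of_tendsto_nhds (tendsto_id (x := 𝓝 (0 : ℝ)))))
      (Or.inr (ENNReal.add_ne_top.2 ⟨hs, ENNReal.one_ne_top⟩))
  exact le_antisymm (ge_of_tendsto hbound (eventually_nhdsWithin_of_forall fun _ hε =>
    hausdorffMeasure_image_le_of_flatWithinAt hflat hε)) zero_le

theorem hausdorffMeasure_image_eq_zero_of_ae_flatWithinAt (hs : MeasurableSet s)
    (hvol : volume s ≠ ∞) {L : ℝ≥0} (hq : LipschitzOnWith L q s)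
    (hflat : ∀ᵐ x ∂volume.restrict s, FlatWithinAt q s x) : μH[1] (q '' s) = 0 := by
  set t := {x ∈ s | FlatWithinAt q s x}
  have hbad : volume (s \ t) = 0 := by
    refine measure_mono_null ?_ (ae_iff.mp ((ae_restrict_iff' hs).mp hflat))
    exact fun x hx hxt => hx.2 ⟨hx.1, hxt hx.1⟩
  have hbad_image : μH[1] (q '' (s \ t)) = 0 := by
    have := (hq.mono (sdiff_subset (t := t))).hausdorffMeasure_image_le zero_le_one
    rwa [hausdorffMeasure_real, hbad, mul_zero, nonpos_iff_eq_zero] at this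
  have hgood_image : μH[1] (q '' t) = 0 :=
    hausdorffMeasure_image_eq_zero_of_flatWithinAt
      (measure_ne_top_of_subset (sep_subset _ _) hvol) fun x hx => hx.2.mono (sep_subset _ _)
  refine measure_mono_null ?_ (measure_union_null hgood_image hbad_image)
  rw [← image_union, union_sdiff_self]
  exact image_mono subset_union_right

end Flat

section CompletionEnds

variable {X : Type*} [PseudoMetricSpace X] {φ : X → ℝ}

def endSet (φ : X → ℝ) : Set (Completion X) :=
  {p | ∃ u : ℕ → X, Tendsto (φ ∘ u) atTop atTop ∧
    Tendsto (fun k => (u k : Completion X)) atTop (𝓝 p)}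

theorem dist_coe_le_of_mem_endSet (hφ : ∀ x y z, φ y ∈ uIcc (φ x) (φ z) → dist x y ≤ dist x z)
    {p p' : Completion X} (hp : p ∈ endSet φ) (hp' : p' ∈ endSet φ) (x : X) :
    dist (x : Completion X) p' ≤ dist (x : Completion X) p := by
  obtain ⟨u, hu, hup⟩ := hp
  obtain ⟨v, hv, hvp'⟩ := hp'
  refine le_of_tendsto (tendsto_const_nhds.dist hvp') ?_
  filter_upwards [hv.eventually_ge_atTop (φ x)] with j hj
  refine ge_of_tendsto (tendsto_const_nhds.dist hup) ?_
  filter_upwards [hu.eventually_ge_atTop (φ (v j))] with k hk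
  rw [Completion.dist_eq, Completion.dist_eq]
  exact hφ _ _ _ (Icc_subset_uIcc ⟨hj, hk⟩)

theorem endSet_subsingleton (hφ : ∀ x y z, φ y ∈ uIcc (φ x) (φ z) → dist x y ≤ dist x z) :
    (endSet φ).Subsingleton := by
  intro p hp p' hp'
  obtain ⟨u, -, hup⟩ := id hp
  have hdist : Tendsto (fun k => dist (u k : Completion X) p') atTop (𝓝 (dist p p')) :=
    hup.dist tendsto_const_nhds
  have hzero : Tendsto (fun k => dist (u k : Completion X) p) atTop (𝓝 0) := by
    simpa using hup.dist (tendsto_const_nhds (x := p))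
  exact dist_le_zero.mp <| le_of_tendsto_of_tendsto hdist hzero <|
    Eventually.of_forall fun k => dist_coe_le_of_mem_endSet hφ hp hp' (u k)

theorem mem_closure_or_mem_endSet (p : Completion X) :
    (∃ n : ℕ, p ∈ closure (((↑) : X → Completion X) '' {x | |φ x| ≤ n})) ∨
      p ∈ endSet φ ∨ p ∈ endSet (-φ) := by
  obtain ⟨u, hup⟩ : ∃ u : ℕ → X, Tendsto (fun k => (u k : Completion X)) atTop (𝓝 p) := by
    obtain ⟨v, hv, hvp⟩ := mem_closure_iff_seq_limit.mp (Completion.denseRange_coe p)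
    choose u hu using hv
    exact ⟨u, by simpa only [hu] using hvp⟩
  by_cases hbdd : ∃ n : ℕ, ∃ᶠ k in atTop, |φ (u k)| ≤ n
  · obtain ⟨n, hn⟩ := hbdd
    exact Or.inl ⟨n, mem_closure_of_frequently_of_tendsto (hn.mono fun k hk => ⟨u k, hk, rfl⟩) hup⟩
  simp only [not_exists, not_frequently, not_le] at hbdd
  have habs : Tendsto (fun k => |φ (u k)|) atTop atTop := by
    refine tendsto_atTop.2 fun b => ?_
    obtain ⟨n, hn⟩ := exists_nat_ge b
    exact (hbdd n).mono fun k hk => hn.trans hk.le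
  right
  by_cases hpos : ∃ᶠ k in atTop, 0 ≤ φ (u k)
  · obtain ⟨ψ, hψ, hψpos⟩ := extraction_of_frequently_atTop hpos
    refine Or.inl ⟨u ∘ ψ, ?_, hup.comp hψ.tendsto_atTop⟩
    exact (habs.comp hψ.tendsto_atTop).congr fun k => abs_of_nonneg (hψpos k)
  · refine Or.inr ⟨u, habs.congr' ?_, hup⟩
    filter_upwards [not_frequently.mp hpos] with k hk
    simp [abs_of_neg (not_le.mp hk)]

variable [MeasurableSpace (Completion X)] [BorelSpace (Completion X)]

theorem hausdorffMeasure_univ_completion_eq_zero {d : ℝ} (hd : 0 < d)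
    (hφ : ∀ x y z, φ y ∈ uIcc (φ x) (φ z) → dist x y ≤ dist x z)
    (hnull : ∀ n : ℕ, μH[d] (closure (((↑) : X → Completion X) '' {x | |φ x| ≤ n})) = 0) :
    μH[d] (univ : Set (Completion X)) = 0 := by
  have := Measure.nullSingletonClass_hausdorff (X := Completion X) hd
  have hφneg : ∀ x y z, (-φ) y ∈ uIcc ((-φ) x) ((-φ) z) → dist x y ≤ dist x z := by
    intro x y z h
    refine hφ x y z ?_
    simpa [mem_uIcc, or_comm, and_comm] using h
  have hends : (endSet φ ∪ endSet (-φ)).Countable :=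
    (endSet_subsingleton hφ).countable.union (endSet_subsingleton hφneg).countable
  refine measure_mono_null (fun p _ => ?_)
    (measure_union_null (measure_iUnion_null hnull) (hends.measure_zero _))
  simpa only [mem_union, mem_iUnion] using mem_closure_or_mem_endSet (φ := φ) p

end CompletionEnds

section Oscillation

variable {N : Type*} [PseudoMetricSpace N] {M : Set ℝ}

noncomputable def oscDist (f : M → N) (x y : M) : ℝ :=
  diam (f '' (Subtype.val ⁻¹' uIcc (x : ℝ) y))

variable (f : M → N)

theorem oscDist_comm (x y : M) : oscDist f x y = oscDist f y x := by
  rw [oscDist, oscDist, uIcc_comm]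

theorem oscDist_self (x : M) : oscDist f x x = 0 := by
  have : (Subtype.val ⁻¹' uIcc (x : ℝ) x : Set M) = {x} := by
    ext; simp [Subtype.ext_iff]
  rw [oscDist, this, image_singleton, diam_singleton]

theorem oscDist_le_two_mul {x y z : M} {C : ℝ} (hC : 0 ≤ C)
    (h : ∀ c : M, (c : ℝ) ∈ uIcc (y : ℝ) z → dist (f c) (f x) ≤ C) :
    oscDist f y z ≤ 2 * C :=
  diam_le_of_subset_closedBall hC (by rintro _ ⟨c, hc, rfl⟩; exact h c hc)

variable {f} {Lf : ℝ≥0} (hf : LipschitzWith Lf f)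

/-- `M` with the pseudometric `oscDist f`, indexed by `hf` because the triangle inequality for
`oscDist f` needs `f` to be bounded on bounded sets. -/
structure OscSpace (hf : LipschitzWith Lf f) : Type where
  pt : M

include hf

theorem isBounded_image_preimage_uIcc (x y : M) :
    Bornology.IsBounded (f '' (Subtype.val ⁻¹' uIcc (x : ℝ) y)) :=
  hf.isBounded_image <| Bornology.isBounded_image_subtype_val.mp <|
    isBounded_Icc _ _ |>.subset (image_preimage_subset _ _)

theorem oscDist_mono {x y x' y' : M} (h : uIcc (x' : ℝ) y' ⊆ uIcc (x : ℝ) y) :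
    oscDist f x' y' ≤ oscDist f x y :=
  diam_mono (image_mono (preimage_mono h)) (isBounded_image_preimage_uIcc hf x y)

theorem dist_le_oscDist (x y : M) : dist (f x) (f y) ≤ oscDist f x y :=
  dist_le_diam_of_mem (isBounded_image_preimage_uIcc hf x y)
    (mem_image_of_mem f left_mem_uIcc) (mem_image_of_mem f right_mem_uIcc)

theorem oscDist_le (x y : M) : oscDist f x y ≤ Lf * dist x y := by
  refine diam_le_of_forall_dist_le (by positivity) ?_
  rintro _ ⟨a, ha, rfl⟩ _ ⟨b, hb, rfl⟩
  calc dist (f a) (f b) ≤ Lf * dist a b := hf.dist_le_mul a b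
    _ ≤ Lf * dist x y := by
      gcongr
      rw [Subtype.dist_eq, Subtype.dist_eq, Real.dist_eq, Real.dist_eq, abs_sub_comm (x : ℝ)]
      exact abs_sub_le_of_uIcc_subset_uIcc (uIcc_subset_uIcc hb ha)

theorem oscDist_triangle (x y z : M) : oscDist f x z ≤ oscDist f x y + oscDist f y z := by
  have hsub : f '' (Subtype.val ⁻¹' uIcc (x : ℝ) z) ⊆
      f '' (Subtype.val ⁻¹' uIcc (x : ℝ) y) ∪ f '' (Subtype.val ⁻¹' uIcc (y : ℝ) z) := by
    rw [← image_union, ← preimage_union]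
    exact image_mono (preimage_mono uIcc_subset_uIcc_union_uIcc)
  calc oscDist f x z ≤ diam (f '' (Subtype.val ⁻¹' uIcc (x : ℝ) y) ∪
        f '' (Subtype.val ⁻¹' uIcc (y : ℝ) z)) :=
      diam_mono hsub ((isBounded_image_preimage_uIcc hf x y).union
        (isBounded_image_preimage_uIcc hf y z))
    _ ≤ oscDist f x y + oscDist f y z :=
      diam_union' ⟨f y, mem_image_of_mem f right_mem_uIcc, mem_image_of_mem f left_mem_uIcc⟩

noncomputable instance : PseudoMetricSpace (OscSpace hf) where
  dist x y := oscDist f x.pt y.pt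
  dist_self x := oscDist_self f x.pt
  dist_comm x y := oscDist_comm f x.pt y.pt
  dist_triangle x y z := oscDist_triangle hf x.pt y.pt z.pt

theorem OscSpace.dist_def (x y : OscSpace hf) : dist x y = oscDist f x.pt y.pt := rfl

noncomputable def toOscCompletion (x : M) : Completion (OscSpace hf) :=
  ((⟨x⟩ : OscSpace hf) : Completion _)

theorem lipschitzWith_toOscCompletion : LipschitzWith Lf (toOscCompletion hf) :=
  LipschitzWith.of_dist_le_mul fun x y => by
    rw [toOscCompletion, toOscCompletion, Completion.dist_eq]
    exact oscDist_le hf x y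

theorem OscSpace.lipschitzWith_comp_pt : LipschitzWith 1 fun x : OscSpace hf => f x.pt :=
  LipschitzWith.of_dist_le_mul fun x y => by
    rw [NNReal.coe_one, one_mul]
    exact dist_le_oscDist hf x.pt y.pt

theorem OscSpace.dist_le_of_mem_uIcc (x y z : OscSpace hf)
    (h : (y.pt : ℝ) ∈ uIcc (x.pt : ℝ) z.pt) : dist x y ≤ dist x z :=
  oscDist_mono hf (uIcc_subset_uIcc_left h)

variable [Nonempty M]

theorem flatWithinAt_toOscCompletion_comp_invFun {a b x : ℝ} (hx : x ∈ M ∩ Icc a b)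
    (h : Tendsto (fun y => dist (f (Function.invFun Subtype.val x))
      (f (Function.invFun Subtype.val y)) / |x - y|) (𝓝[(M ∩ Icc a b) \ {x}] x) (𝓝 0)) :
    FlatWithinAt (toOscCompletion hf ∘ Function.invFun Subtype.val) (M ∩ Icc a b) x := by
  set γ : ℝ → M := Function.invFun Subtype.val
  set x' : M := ⟨x, hx.1⟩
  have hγ : ∀ t (ht : t ∈ M), γ t = ⟨t, ht⟩ := fun t ht => Function.invFun_subtype_val ht
  have hγx : γ x = x' := hγ x hx.1
  intro ε hε
  obtain ⟨δ, hδ, hsmall⟩ := Metric.mem_nhdsWithin_iff.mp (h (gt_mem_nhds (half_pos hε)))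
  have hnear : ∀ c : M, (c : ℝ) ∈ Icc a b → |(c : ℝ) - x| < δ →
      dist (f c) (f x') ≤ ε / 2 * |(c : ℝ) - x| := by
    intro c hc hcx
    rcases eq_or_ne (c : ℝ) x with hcx' | hcx'
    · rw [show c = x' from Subtype.ext hcx', dist_self]
      positivity
    · have hlt : dist (f x') (f c) / |x - c| < ε / 2 := by
        simpa [hγx, hγ c c.2] using hsmall ⟨by rwa [mem_ball, Real.dist_eq], ⟨c.2, hc⟩, hcx'⟩
      rw [div_lt_iff₀ (abs_pos.2 (sub_ne_zero.2 hcx'.symm)), abs_sub_comm, dist_comm] at hlt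
      exact hlt.le
  filter_upwards [Ioo_mem_nhdsGT hδ] with r hr
  rw [ediam_image_le_iff]
  rintro y ⟨hyB, hyr⟩ z ⟨hzB, hzr⟩
  rw [edist_dist]
  refine ENNReal.ofReal_le_ofReal ?_
  rw [Function.comp_apply, Function.comp_apply, hγ y hyB.1, hγ z hzB.1, toOscCompletion,
    toOscCompletion, Completion.dist_eq, OscSpace.dist_def]
  calc oscDist f ⟨y, hyB.1⟩ ⟨z, hzB.1⟩ ≤ 2 * (ε / 2 * r) := by
        refine oscDist_le_two_mul f (x := x') (mul_nonneg (half_pos hε).le hr.1.le) fun c hc => ?_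
        have hcr : |(c : ℝ) - x| ≤ r := by
          rw [← Real.dist_eq, ← mem_closedBall, Real.closedBall_eq_Icc]
          rw [mem_closedBall, Real.dist_eq, abs_le] at hyr hzr
          exact uIcc_subset_Icc ⟨by linarith, by linarith⟩ ⟨by linarith, by linarith⟩ hc
        exact (hnear c (uIcc_subset_Icc hyB.2 hzB.2 hc) (hcr.trans_lt hr.2)).trans (by gcongr)
    _ = ε * r := by ring

end Oscillation

theorem OscSpace.hausdorffMeasure_closure_coe_image_eq_zero {N : Type*} [MetricSpace N]
    {M : Set ℝ} [Nonempty M] (hM : IsClosed M) {f : M → N} (hcf : CurveFlat f) {Lf : ℝ≥0}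
    (hf : LipschitzWith Lf f) [MeasurableSpace (Completion (OscSpace hf))]
    [BorelSpace (Completion (OscSpace hf))] (r : ℝ) :
    μH[1] (closure (((↑) : OscSpace hf → Completion (OscSpace hf)) ''
      {x | |(x.pt : ℝ)| ≤ r})) = 0 := by
  set γ : ℝ → M := Function.invFun Subtype.val
  have hγ : ∀ t (ht : t ∈ M), γ t = ⟨t, ht⟩ := fun t ht => Function.invFun_subtype_val ht
  set B := M ∩ Icc (-r) r
  have hB : IsCompact B := isCompact_Icc.inter_left hM
  have hγlip : LipschitzOnWith 1 γ B := LipschitzOnWith.of_dist_le_mul fun s hs t ht => by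
    rw [hγ s hs.1, hγ t ht.1, Subtype.dist_eq, NNReal.coe_one, one_mul]
  have hqlip := (lipschitzWith_toOscCompletion hf).comp_lipschitzOnWith hγlip
  have himage : ((↑) : OscSpace hf → Completion (OscSpace hf)) '' {x | |(x.pt : ℝ)| ≤ r} =
      (toOscCompletion hf ∘ γ) '' B := by
    ext p
    constructor
    · rintro ⟨x, hx, rfl⟩
      exact ⟨x.pt, ⟨x.pt.2, abs_le.mp hx⟩, by simp [toOscCompletion, hγ]⟩
    · rintro ⟨t, ⟨htM, ht⟩, rfl⟩
      exact ⟨⟨γ t⟩, by simpa [hγ t htM] using abs_le.mpr ht, rfl⟩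
  rw [himage, (hB.image_of_continuousOn hqlip.continuousOn).isClosed.closure_eq]
  refine hausdorffMeasure_image_eq_zero_of_ae_flatWithinAt (hM.inter isClosed_Icc).measurableSet
    hB.measure_lt_top.ne hqlip ?_
  filter_upwards [hcf B hB γ 1 hγlip, ae_restrict_mem (hM.inter isClosed_Icc).measurableSet]
    with x hx hxB
  exact flatWithinAt_toOscCompletion_comp_invFun hf hxB hx

theorem purelyOneUnrectifiable_of_H1_univ_eq_zero {P : Type*} [MetricSpace P]
    (h : H1 P univ = 0) : PurelyOneUnrectifiable P :=
  fun _ _ _ _ => measure_mono_null (subset_univ _) h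

theorem curveFlat_factors_through_p1u_of_real_subset_general
    (M : Set ℝ) (hM : IsComplete M) {N : Type} [MetricSpace N] [CompleteSpace N]
    (baseM : M) (f : M → N) (Lf : NNReal) (hf : LipschitzWith Lf f)
    (hcf : CurveFlat f) :
    Nonempty (P1UFactorization f) := by
  have : Nonempty M := ⟨baseM⟩
  let : MeasurableSpace (Completion (OscSpace hf)) := borel _
  have : BorelSpace (Completion (OscSpace hf)) := ⟨rfl⟩
  have hnull : μH[1] (univ : Set (Completion (OscSpace hf))) = 0 :=
    hausdorffMeasure_univ_completion_eq_zero one_pos (OscSpace.dist_le_of_mem_uIcc hf)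
      fun n => OscSpace.hausdorffMeasure_closure_coe_image_eq_zero hM.isClosed hcf hf n
  have hpt := OscSpace.lipschitzWith_comp_pt hf
  exact ⟨{ Q := Completion (OscSpace hf)
           complete := inferInstance
           p1u := purelyOneUnrectifiable_of_H1_univ_eq_zero hnull
           g := toOscCompletion hf
           h := Completion.extension fun x : OscSpace hf => f x.pt
           Lg := Lf
           Lh := 1
           lipg := lipschitzWith_toOscCompletion hf
           liph := hpt.completion_extension
           fact := funext fun x => (Completion.extension_coe hpt.uniformContinuous _).symm }⟩

/-- Every curve-flat base-point-preserving Lipschitz map from a complete subset of `ℝ`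
into a complete metric space factors through a complete purely 1-unrectifiable metric
space. -/
theorem curveFlat_factors_through_p1u_of_real_subset
    (M : Set ℝ) (hM : IsComplete M) {N : Type} [MetricSpace N] [CompleteSpace N]
    (baseM : M) (baseN : N) (f : M → N) (Lf : NNReal) (hf : LipschitzWith Lf f)
    (hf0 : f baseM = baseN) (hcf : CurveFlat f) :
    Nonempty (P1UFactorization f) :=
  curveFlat_factors_through_p1u_of_real_subset_general M hM baseM f Lf hf hcf
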